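/- arXiv:1201.1996 — 2 statements merged into one kernel-verified Lean document; each statement's English description precedes it below -/
import Mathlib

section
/- Let S = (S_t)_{t∈[0,1]} be a bounded càdlàg adapted process. Then Var(S) = lim_{n→∞} Var(S, D_n); in particular the supremum over all partitions of the mean variation equals the (monotone) limit along the dyadic partitions. -/
open MeasureTheory Set Filter Topology

noncomputable section

namespace BD

variable {Ω : Type*} {m0 : MeasurableSpace Ω}

/-- The filtration is right-continuous. -/
def RightContinuousFiltration (ℱ : Filtration ℝ m0) : Prop :=
  ∀ t : ℝ, ℱ t = ⨅ s ∈ Set.Ioi t, ℱ s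

/-- `ℱ 0` contains all `P`-null sets. -/
def CompleteFiltration (ℱ : Filtration ℝ m0) (P : Measure Ω) : Prop :=
  ∀ s : Set Ω, P s = 0 → MeasurableSet[ℱ 0] s

/-- The usual conditions: right continuity and completeness. -/
def UsualConditions (ℱ : Filtration ℝ m0) (P : Measure Ω) : Prop :=
  RightContinuousFiltration ℱ ∧ CompleteFiltration ℱ P

/-- A real function is càdlàg on the time interval `[0,1]`: it is right-continuous on `[0,1)`
and has left limits on `(0,1]`. -/
def IsCadlagFun (f : ℝ → ℝ) : Prop :=
  (∀ t ∈ Set.Ico (0:ℝ) 1, ContinuousWithinAt f (Set.Ici t) t) ∧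
  (∀ t ∈ Set.Ioc (0:ℝ) 1, ∃ l : ℝ, Tendsto f (nhdsWithin t (Set.Iio t)) (nhds l))

/-- A process is càdlàg if all its paths are càdlàg on `[0,1]`. -/
def Cadlag (S : ℝ → Ω → ℝ) : Prop := ∀ ω, IsCadlagFun fun t => S t ω

/-- The process is adapted on the time interval `[0,1]`. -/
def AdaptedOn (ℱ : Filtration ℝ m0) (S : ℝ → Ω → ℝ) : Prop :=
  ∀ t ∈ Set.Icc (0:ℝ) 1, StronglyMeasurable[ℱ t] (S t)

/-- A `[0,1] ∪ {∞}`-valued random time (modelled as a `WithTop ℝ`-valued map) is a stopping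
time if `{ρ ≤ t} ∈ ℱ t` for every `t`. -/
def IsStoppingTimeTop (ℱ : Filtration ℝ m0) (ρ : Ω → WithTop ℝ) : Prop :=
  ∀ t : ℝ, MeasurableSet[ℱ t] {ω | ρ ω ≤ (t : WithTop ℝ)}

/-- The random time takes values in `[0,1] ∪ {∞}`. -/
def ValuedInUnitOrTop (ρ : Ω → WithTop ℝ) : Prop :=
  ∀ ω, ρ ω = ⊤ ∨ ∃ t ∈ Set.Icc (0:ℝ) 1, ρ ω = (t : WithTop ℝ)

/-- The process `S` stopped at the (possibly infinite) random time `ρ`. -/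
def stopped (S : ℝ → Ω → ℝ) (ρ : Ω → WithTop ℝ) : ℝ → Ω → ℝ :=
  fun t ω => S ((min (t : WithTop ℝ) (ρ ω)).untopD t) ω

/-- A simple integrand `H = ∑_{i=1}^k H^i 1_{(τ_i, τ_{i+1}]}` where the `τ_i` are `[0,1]`-valued
stopping times, increasing in `i`, and `H^i` is bounded and `ℱ_{τ_i}`-measurable. -/
structure SimpleIntegrand (ℱ : Filtration ℝ m0) where
  k : ℕ
  τ : Fin (k + 1) → Ω → ℝ
  τ_mono : ∀ ω, Monotone fun i => τ i ω
  τ_mem : ∀ i ω, τ i ω ∈ Set.Icc (0:ℝ) 1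
  τ_stopping : ∀ i, IsStoppingTime ℱ (fun ω => (τ i ω : WithTop ℝ))
  H : Fin k → Ω → ℝ
  H_bdd : ∀ i, ∃ C : ℝ, ∀ ω, |H i ω| ≤ C
  H_meas : ∀ i : Fin k,
    StronglyMeasurable[(τ_stopping i.castSucc).measurableSpace] (H i)

/-- The value of a simple integrand at time `t`. -/
def SimpleIntegrand.val {ℱ : Filtration ℝ m0} (Hs : SimpleIntegrand ℱ) (t : ℝ) (ω : Ω) : ℝ :=
  ∑ i : Fin Hs.k, if Hs.τ i.castSucc ω < t ∧ t ≤ Hs.τ i.succ ω then Hs.H i ω else 0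

/-- `c` is a uniform (sup-norm) bound for the simple integrand. -/
def SimpleIntegrand.BddBy {ℱ : Filtration ℝ m0} (Hs : SimpleIntegrand ℱ) (c : ℝ) : Prop :=
  ∀ t ω, |Hs.val t ω| ≤ c

/-- The elementary stochastic integral `I_S(H) = ∑ H^i (S_{τ_{i+1}} - S_{τ_i})`. -/
def elemIntegral {ℱ : Filtration ℝ m0} (S : ℝ → Ω → ℝ) (Hs : SimpleIntegrand ℱ) (ω : Ω) : ℝ :=
  ∑ i : Fin Hs.k, Hs.H i ω * (S (Hs.τ i.succ ω) ω - S (Hs.τ i.castSucc ω) ω)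

/-- `S` is a good integrator: `I_S` is continuous from the simple integrands (with the sup norm)
to `L⁰(P)`, i.e. `‖Hⁿ‖_∞ → 0` implies `I_S(Hⁿ) → 0` in probability. -/
def GoodIntegrator (ℱ : Filtration ℝ m0) (P : Measure Ω) (S : ℝ → Ω → ℝ) : Prop :=
  ∀ (Hs : ℕ → SimpleIntegrand ℱ) (c : ℕ → ℝ),
    (∀ n, (Hs n).BddBy (c n)) → Tendsto c atTop (nhds 0) →
    TendstoInMeasure P (fun n => elemIntegral S (Hs n)) atTop 0

/-- A submartingale on the time interval `[0,1]`. -/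
def SubmartingaleOn (ℱ : Filtration ℝ m0) (P : Measure Ω) (Y : ℝ → Ω → ℝ) : Prop :=
  AdaptedOn ℱ Y ∧ (∀ t ∈ Set.Icc (0:ℝ) 1, Integrable (Y t) P) ∧
    ∀ s t : ℝ, s ∈ Set.Icc (0:ℝ) 1 → t ∈ Set.Icc (0:ℝ) 1 → s ≤ t →
      ∀ᵐ ω ∂P, Y s ω ≤ (P[Y t | ℱ s]) ω

/-- A martingale on the time interval `[0,1]`. -/
def MartingaleOn (ℱ : Filtration ℝ m0) (P : Measure Ω) (Y : ℝ → Ω → ℝ) : Prop :=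
  AdaptedOn ℱ Y ∧ (∀ t ∈ Set.Icc (0:ℝ) 1, Integrable (Y t) P) ∧
    ∀ s t : ℝ, s ∈ Set.Icc (0:ℝ) 1 → t ∈ Set.Icc (0:ℝ) 1 → s ≤ t →
      (P[Y t | ℱ s]) =ᵐ[P] Y s

/-- A local martingale on `[0,1]`: for every `ε > 0` there is a `[0,1] ∪ {∞}`-valued stopping
time `ρ` with `P(ρ = ∞) ≥ 1 - ε` such that the stopped process is a martingale. -/
def IsLocalMartingaleOn (ℱ : Filtration ℝ m0) (P : Measure Ω) (M : ℝ → Ω → ℝ) : Prop :=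
  ∀ ε : ℝ, 0 < ε → ∃ ρ : Ω → WithTop ℝ, IsStoppingTimeTop ℱ ρ ∧ ValuedInUnitOrTop ρ ∧
    1 - ENNReal.ofReal ε ≤ P {ω | ρ ω = ⊤} ∧ MartingaleOn ℱ P (stopped M ρ)

/-- All paths of the process have finite total variation on `[0,1]`. -/
def FiniteVariationPaths (A : ℝ → Ω → ℝ) : Prop :=
  ∀ ω, BoundedVariationOn (fun t => A t ω) (Set.Icc (0:ℝ) 1)

/-- `S` is a semimartingale on `[0,1]`: it is (up to indistinguishability on `[0,1]`) the sum
of a càdlàg local martingale and a càdlàg adapted process of finite variation. -/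
def IsSemimartingaleOn (ℱ : Filtration ℝ m0) (P : Measure Ω) (S : ℝ → Ω → ℝ) : Prop :=
  ∃ M A : ℝ → Ω → ℝ, Cadlag M ∧ IsLocalMartingaleOn ℱ P M ∧
    Cadlag A ∧ AdaptedOn ℱ A ∧ FiniteVariationPaths A ∧
    ∀ᵐ ω ∂P, ∀ t ∈ Set.Icc (0:ℝ) 1, S t ω = M t ω + A t ω

/-- A partition `0 = t_0 < t_1 < … < t_n = 1` of `[0,1]`. -/
structure Partition where
  n : ℕ
  t : Fin (n + 1) → ℝ
  strictMono : StrictMono t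
  first : t 0 = 0
  last : t (Fin.last n) = 1

/-- The mean variation `Var(S, π) = E ∑_i |E[S_{t_{i+1}} - S_{t_i} | ℱ_{t_i}]|` of `S`
along the partition `π`. -/
def meanVar (ℱ : Filtration ℝ m0) (P : Measure Ω) (S : ℝ → Ω → ℝ) (π : Partition) : ℝ :=
  ∑ i : Fin π.n,
    ∫ ω, |(P[fun ω => S (π.t i.succ) ω - S (π.t i.castSucc) ω | ℱ (π.t i.castSucc)]) ω| ∂P

/-- The `n`-th dyadic partition `{0, 1/2ⁿ, …, 1}` of `[0,1]`. -/
def dyadicPartition (n : ℕ) : Partition where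
  n := 2 ^ n
  t := fun i => (i.val : ℝ) / 2 ^ n
  strictMono := by
    intro i j hij
    have h2 : (0:ℝ) < 2 ^ n := by positivity
    have h : (i.val : ℝ) < (j.val : ℝ) := by exact_mod_cast hij
    exact div_lt_div_of_pos_right h h2
  first := by simp
  last := by
    have h2 : (2:ℝ) ^ n ≠ 0 := by positivity
    simp [Fin.last, h2]

/-- The Riemann sum `∑_{i=0}^{2ⁿ-1} H_{i/2ⁿ} (S_{(i+1)/2ⁿ} - S_{i/2ⁿ})`. -/
def riemannSum (S H : ℝ → Ω → ℝ) (n : ℕ) (ω : Ω) : ℝ :=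
  ∑ i ∈ Finset.range (2 ^ n),
    H ((i : ℝ) / 2 ^ n) ω * (S (((i : ℝ) + 1) / 2 ^ n) ω - S ((i : ℝ) / 2 ^ n) ω)

/-- A bounded adapted process with continuous paths on `[0,1]`. -/
def BddContAdapted (ℱ : Filtration ℝ m0) (H : ℝ → Ω → ℝ) : Prop :=
  (∃ C : ℝ, ∀ t ∈ Set.Icc (0:ℝ) 1, ∀ ω, |H t ω| ≤ C) ∧ AdaptedOn ℱ H ∧
    ∀ ω, ContinuousOn (fun t => H t ω) (Set.Icc (0:ℝ) 1)

/-- `S` is a Riemann integrator: for every bounded adapted continuous process `H`, the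
Riemann sums along the dyadic partitions converge in probability. -/
def RiemannIntegrator (ℱ : Filtration ℝ m0) (P : Measure Ω) (S : ℝ → Ω → ℝ) : Prop :=
  ∀ H : ℝ → Ω → ℝ, BddContAdapted ℱ H →
    ∃ L : Ω → ℝ, TendstoInMeasure P (fun n => riemannSum S H n) atTop L

/-- An element of `ℰ_{D_n}`: a process `∑_{i=0}^{2ⁿ-1} H^i 1_{(i/2ⁿ, (i+1)/2ⁿ]}` with `H⁰ = 0`
and `H^i` bounded and `ℱ_{(i-1)/2ⁿ}`-measurable for `1 ≤ i ≤ 2ⁿ - 1`. -/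
structure DyadicIntegrand (ℱ : Filtration ℝ m0) where
  n : ℕ
  H : ℕ → Ω → ℝ
  H_zero : H 0 = fun _ => 0
  H_bdd : ∀ i, ∃ C : ℝ, ∀ ω, |H i ω| ≤ C
  H_meas : ∀ i : ℕ, 1 ≤ i → i < 2 ^ n →
    StronglyMeasurable[ℱ (((i : ℝ) - 1) / 2 ^ n)] (H i)

/-- The elementary integral of an element of `ℰ_{D_n}` against `S`. -/
def dyadicIntegral {ℱ : Filtration ℝ m0} (S : ℝ → Ω → ℝ) (D : DyadicIntegrand ℱ) (ω : Ω) : ℝ :=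
  ∑ i ∈ Finset.range (2 ^ D.n),
    D.H i ω * (S (((i : ℝ) + 1) / 2 ^ D.n) ω - S ((i : ℝ) / 2 ^ D.n) ω)

/-- `c` is a uniform bound for an element of `ℰ_{D_n}` (hence for its sup norm). -/
def DyadicIntegrand.BddBy {ℱ : Filtration ℝ m0} (D : DyadicIntegrand ℱ) (c : ℝ) : Prop :=
  ∀ i < 2 ^ D.n, ∀ ω, |D.H i ω| ≤ c

/-- The jump `ΔS_t = S_t - S_{t-}` of the process `S` at time `t`. -/
def jump (S : ℝ → Ω → ℝ) (t : ℝ) (ω : Ω) : ℝ :=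
  S t ω - Function.leftLim (fun s => S s ω) t

/-- The times `s ∈ (0, t]` at which `S` has a jump of size at least `1`. -/
def bigJumpTimes (S : ℝ → Ω → ℝ) (t : ℝ) (ω : Ω) : Set ℝ :=
  {s : ℝ | s ∈ Set.Ioc (0:ℝ) t ∧ 1 ≤ |jump S s ω|}

/-- The sum of the big jumps: `J_t = ∑_{0 < s ≤ t} ΔS_s 1_{|ΔS_s| ≥ 1}`. -/
def bigJumpPart (S : ℝ → Ω → ℝ) (t : ℝ) (ω : Ω) : ℝ :=
  ∑ᶠ s ∈ bigJumpTimes S t ω, jump S s ω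

/-! Conditioning on a larger σ-algebra can only increase `E |E[X | 𝒢]|`, so by the tower
property the mean variation grows under refinement; in particular `Var(S, D_n)` is monotone in
`n` and bounded by `Var(S)`. Conversely, rounding the points of an arbitrary partition up to the
dyadic grid of level `n` gives a chain of times coarser than `D_n`, and the `L¹` error of the
rounding tends to `0` by right continuity and bounded convergence, so
`Var(S, π) ≤ sup_n Var(S, D_n)`. -/

section MeanVarTerm

variable {ℱ : Filtration ℝ m0} {P : Measure Ω} {S : ℝ → Ω → ℝ}

def meanVarTerm (ℱ : Filtration ℝ m0) (P : Measure Ω) (S : ℝ → Ω → ℝ) (s t : ℝ) : ℝ :=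
  ∫ ω, |(P[fun ω => S t ω - S s ω | ℱ s]) ω| ∂P

lemma meanVarTerm_self (s : ℝ) : meanVarTerm ℱ P S s s = 0 := by
  simp [meanVarTerm]

lemma integral_abs_condExp_mono {m₁ m₂ : MeasurableSpace Ω} (h₁₂ : m₁ ≤ m₂) (h₂ : m₂ ≤ m0)
    [SigmaFinite (P.trim h₂)] (f : Ω → ℝ) :
    ∫ ω, |(P[f | m₁]) ω| ∂P ≤ ∫ ω, |(P[f | m₂]) ω| ∂P :=
  calc ∫ ω, |(P[f | m₁]) ω| ∂P = ∫ ω, |(P[P[f | m₂] | m₁]) ω| ∂P :=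
        integral_congr_ae ((condExp_condExp_of_le h₁₂ h₂).symm.fun_comp abs)
    _ ≤ ∫ ω, |(P[f | m₂]) ω| ∂P := integral_abs_condExp_le _

lemma integral_abs_condExp_add_le {m : MeasurableSpace Ω} {f g : Ω → ℝ} (hf : Integrable f P)
    (hg : Integrable g P) :
    ∫ ω, |(P[f + g | m]) ω| ∂P ≤ ∫ ω, |(P[f | m]) ω| ∂P + ∫ ω, |(P[g | m]) ω| ∂P :=
  calc ∫ ω, |(P[f + g | m]) ω| ∂P = ∫ ω, |(P[f | m]) ω + (P[g | m]) ω| ∂P :=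
        integral_congr_ae ((condExp_add hf hg m).fun_comp abs)
    _ ≤ ∫ ω, (|(P[f | m]) ω| + |(P[g | m]) ω|) ∂P :=
        integral_mono (integrable_condExp.add integrable_condExp).abs
          (integrable_condExp.abs.add integrable_condExp.abs) fun _ => abs_add_le _ _
    _ = _ := integral_add integrable_condExp.abs integrable_condExp.abs

variable [IsFiniteMeasure P]

lemma meanVarTerm_le_add {s u t : ℝ} (hsu : s ≤ u) (hs : Integrable (S s) P)
    (hu : Integrable (S u) P) (ht : Integrable (S t) P) :
    meanVarTerm ℱ P S s t ≤ meanVarTerm ℱ P S s u + meanVarTerm ℱ P S u t := by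
  have hsplit : (fun ω => S t ω - S s ω) =
      (fun ω => S u ω - S s ω) + fun ω => S t ω - S u ω := by
    ext; simp only [Pi.add_apply]; ring
  calc meanVarTerm ℱ P S s t
      ≤ meanVarTerm ℱ P S s u + ∫ ω, |(P[fun ω => S t ω - S u ω | ℱ s]) ω| ∂P := by
        rw [meanVarTerm, hsplit]
        exact integral_abs_condExp_add_le (hu.sub hs) (ht.sub hu)
    _ ≤ meanVarTerm ℱ P S s u + meanVarTerm ℱ P S u t := by
        gcongr
        exact integral_abs_condExp_mono (ℱ.mono hsu) (ℱ.le u) _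

lemma meanVarTerm_le_add_integral_abs_sub {s t s' t' : ℝ} (hss' : s ≤ s')
    (hs : Integrable (S s) P) (ht : Integrable (S t) P) (hs' : Integrable (S s') P)
    (ht' : Integrable (S t') P) :
    meanVarTerm ℱ P S s t ≤ meanVarTerm ℱ P S s' t' + ∫ ω, |S t ω - S t' ω| ∂P
      + ∫ ω, |S s ω - S s' ω| ∂P := by
  have hsplit : (fun ω => S t ω - S s ω) = ((fun ω => S t' ω - S s' ω)
      + fun ω => S t ω - S t' ω) + fun ω => S s' ω - S s ω := by
    ext; simp only [Pi.add_apply]; ring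
  calc meanVarTerm ℱ P S s t
      ≤ ∫ ω, |(P[fun ω => S t ω - S s ω | ℱ s']) ω| ∂P :=
        integral_abs_condExp_mono (ℱ.mono hss') (ℱ.le s') _
    _ ≤ meanVarTerm ℱ P S s' t' + ∫ ω, |(P[fun ω => S t ω - S t' ω | ℱ s']) ω| ∂P
          + ∫ ω, |(P[fun ω => S s' ω - S s ω | ℱ s']) ω| ∂P := by
        rw [hsplit, meanVarTerm]
        exact (integral_abs_condExp_add_le ((ht'.sub hs').add (ht.sub ht'))
          (g := fun ω => S s' ω - S s ω) (hs'.sub hs)).trans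
          (add_le_add (integral_abs_condExp_add_le (ht'.sub hs') (ht.sub ht')) le_rfl)
    _ ≤ _ := add_le_add (add_le_add le_rfl (integral_abs_condExp_le _))
        ((integral_abs_condExp_le _).trans_eq
          (integral_congr_ae (ae_of_all _ fun ω => abs_sub_comm _ _)))

lemma meanVarTerm_le_sum_Ico {a : ℕ → ℝ} (ha : Monotone a) {p q : ℕ} (hpq : p ≤ q)
    (hS : ∀ k ≤ q, Integrable (S (a k)) P) :
    meanVarTerm ℱ P S (a p) (a q) ≤ ∑ k ∈ Finset.Ico p q, meanVarTerm ℱ P S (a k) (a (k + 1)) := by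
  induction q, hpq using Nat.le_induction with
  | base => simp [meanVarTerm_self]
  | succ q hpq ih =>
    rw [Finset.sum_Ico_succ_top hpq]
    exact (meanVarTerm_le_add (ha hpq) (hS p (by omega)) (hS q (by omega)) (hS _ le_rfl)).trans
      (add_le_add_left (ih fun k hk => hS k (by omega)) _)

lemma sum_meanVarTerm_comp_le {a : ℕ → ℝ} (ha : Monotone a) {J : ℕ → ℕ} {m : ℕ}
    (hJ : MonotoneOn J (Iic m)) (hS : ∀ k ≤ J m, Integrable (S (a k)) P) :
    ∑ i ∈ Finset.range m, meanVarTerm ℱ P S (a (J i)) (a (J (i + 1))) ≤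
      ∑ k ∈ Finset.Ico (J 0) (J m), meanVarTerm ℱ P S (a k) (a (k + 1)) := by
  induction m with
  | zero => simp
  | succ m ih =>
    have hJm : J m ≤ J (m + 1) := hJ (by simp) (by simp) (by omega)
    have hJ0 : J 0 ≤ J m := hJ (by simp) (by simp) (by omega)
    rw [Finset.sum_range_succ, ← Finset.sum_Ico_consecutive _ hJ0 hJm]
    exact add_le_add
      (ih (hJ.mono (Iic_subset_Iic.2 m.le_succ)) fun k hk => hS k (hk.trans hJm))
      (meanVarTerm_le_sum_Ico ha hJm hS)

end MeanVarTerm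

/-- Indices beyond `π.n` are clamped to the last point `1`. -/
def Partition.point (π : Partition) (k : ℕ) : ℝ := π.t (Fin.clamp k π.n)

lemma Partition.monotone_point (π : Partition) : Monotone π.point :=
  fun _ _ h => π.strictMono.monotone (Fin.clamp_monotone h)

lemma Partition.point_zero (π : Partition) : π.point 0 = 0 := by
  simpa [Partition.point, Fin.clamp] using π.first

lemma Partition.point_of_le (π : Partition) {k : ℕ} (hk : π.n ≤ k) : π.point k = 1 := by
  rw [Partition.point, Fin.clamp_eq_last _ _ hk, π.last]

lemma Partition.point_mem_Icc (π : Partition) (k : ℕ) : π.point k ∈ Icc (0:ℝ) 1 :=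
  ⟨π.point_zero ▸ π.monotone_point (Nat.zero_le k),
    π.point_of_le (le_max_right k π.n) ▸ π.monotone_point (le_max_left k π.n)⟩

section MeanVar

variable {ℱ : Filtration ℝ m0} {P : Measure Ω} {S : ℝ → Ω → ℝ}

lemma meanVar_eq_sum_range (π : Partition) :
    meanVar ℱ P S π = ∑ k ∈ Finset.range π.n, meanVarTerm ℱ P S (π.point k) (π.point (k + 1)) := by
  rw [meanVar, ← Fin.sum_univ_eq_sum_range]
  refine Finset.sum_congr rfl fun i _ => ?_
  have hcs : Fin.clamp i π.n = i.castSucc := Fin.ext (min_eq_left i.is_lt.le)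
  have hs : Fin.clamp (i + 1) π.n = i.succ := Fin.ext (min_eq_left i.is_lt)
  rw [meanVarTerm, Partition.point, Partition.point, hcs, hs]

lemma meanVar_dyadicPartition (n : ℕ) :
    meanVar ℱ P S (dyadicPartition n) =
      ∑ k ∈ Finset.range (2 ^ n), meanVarTerm ℱ P S (k / 2 ^ n) ((k + 1 : ℕ) / 2 ^ n) :=
  Fin.sum_univ_eq_sum_range (fun k => meanVarTerm ℱ P S (k / 2 ^ n) ((k + 1 : ℕ) / 2 ^ n)) _

end MeanVar

lemma natCast_div_two_pow_mem_Icc {n k : ℕ} (hk : k ≤ 2 ^ n) : (k : ℝ) / 2 ^ n ∈ Icc (0:ℝ) 1 :=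
  ⟨by positivity, div_le_one_of_le₀ (by exact_mod_cast hk) (by positivity)⟩

lemma natCeil_mul_two_pow_div_mem_Icc {t : ℝ} (ht : t ∈ Icc (0:ℝ) 1) (n : ℕ) :
    (⌈t * 2 ^ n⌉₊ : ℝ) / 2 ^ n ∈ Icc t 1 := by
  have h2 : (0:ℝ) < 2 ^ n := by positivity
  refine ⟨(le_div_iff₀ h2).2 (Nat.le_ceil _), div_le_one_of_le₀ ?_ h2.le⟩
  exact_mod_cast Nat.ceil_le.2 (by simpa using mul_le_mul_of_nonneg_right ht.2 h2.le)

lemma tendsto_natCeil_mul_two_pow_div {t : ℝ} (ht : t ∈ Icc (0:ℝ) 1) :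
    Tendsto (fun n : ℕ => (⌈t * 2 ^ n⌉₊ : ℝ) / 2 ^ n) atTop (𝓝[Icc t 1] t) := by
  refine tendsto_nhdsWithin_iff.2 ⟨?_, Eventually.of_forall (natCeil_mul_two_pow_div_mem_Icc ht)⟩
  have hupper : ∀ n : ℕ, (⌈t * 2 ^ n⌉₊ : ℝ) / 2 ^ n ≤ t + (2 ^ n)⁻¹ := fun n => by
    have h2 : (0:ℝ) < 2 ^ n := by positivity
    rw [div_le_iff₀ (by positivity), add_mul, inv_mul_cancel₀ (by positivity)]
    exact (Nat.ceil_lt_add_one (mul_nonneg ht.1 h2.le)).le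
  have hlim : Tendsto (fun n : ℕ => t + ((2:ℝ) ^ n)⁻¹) atTop (𝓝 t) := by
    simpa using (tendsto_const_nhds (x := t)).add
      (tendsto_inv_atTop_zero.comp (tendsto_pow_atTop_atTop_of_one_lt one_lt_two))
  exact tendsto_of_tendsto_of_tendsto_of_le_of_le tendsto_const_nhds hlim
    (fun n => (natCeil_mul_two_pow_div_mem_Icc ht n).1) hupper

lemma continuousWithinAt_Icc_one_of_right {f : ℝ → ℝ}
    (hf : ∀ t ∈ Ico (0:ℝ) 1, ContinuousWithinAt f (Ici t) t) {t : ℝ} (ht : t ∈ Icc (0:ℝ) 1) :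
    ContinuousWithinAt f (Icc t 1) t := by
  rcases ht.2.eq_or_lt with rfl | h1
  · rw [Icc_self]
    exact continuousWithinAt_singleton
  · exact (hf t ⟨ht.1, h1⟩).mono Icc_subset_Ici_self

lemma tendsto_integral_abs_sub_of_tendsto {P : Measure Ω} [IsFiniteMeasure P]
    {f : ℕ → Ω → ℝ} {g : Ω → ℝ} {C : ℝ} (hf : ∀ n, AEStronglyMeasurable (f n) P)
    (hg : AEStronglyMeasurable g P) (hfC : ∀ n ω, |f n ω| ≤ C) (hgC : ∀ ω, |g ω| ≤ C)
    (hfg : ∀ᵐ ω ∂P, Tendsto (fun n => f n ω) atTop (𝓝 (g ω))) :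
    Tendsto (fun n => ∫ ω, |g ω - f n ω| ∂P) atTop (𝓝 0) := by
  have h := tendsto_integral_of_dominated_convergence (μ := P)
    (F := fun n ω => |g ω - f n ω|) (f := fun _ => 0) (fun _ => C + C)
    (fun n => (hg.sub (hf n)).norm) (integrable_const _)
    (fun n => ae_of_all _ fun ω => by
      rw [Real.norm_eq_abs, abs_abs]
      exact (abs_sub _ _).trans (add_le_add (hgC ω) (hfC n ω)))
    (hfg.mono fun ω hω => by simpa using ((tendsto_const_nhds (x := g ω)).sub hω).abs)
  simpa using h

lemma ofReal_le_iSup_of_le_add {a : ℝ} {b e : ℕ → ℝ} (h : ∀ n, a ≤ b n + e n)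
    (he : Tendsto e atTop (𝓝 0)) : ENNReal.ofReal a ≤ ⨆ n, ENNReal.ofReal (b n) := by
  refine ge_of_tendsto' (f := fun n => (⨆ n, ENNReal.ofReal (b n)) + ENNReal.ofReal (e n))
    (by simpa using tendsto_const_nhds.add (ENNReal.tendsto_ofReal he)) fun n => ?_
  calc ENNReal.ofReal a ≤ ENNReal.ofReal (b n + e n) := ENNReal.ofReal_le_ofReal (h n)
    _ ≤ ENNReal.ofReal (b n) + ENNReal.ofReal (e n) := ENNReal.ofReal_add_le
    _ ≤ _ := add_le_add (le_iSup (fun n => ENNReal.ofReal (b n)) n) le_rfl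

section Dyadic

variable {ℱ : Filtration ℝ m0} {P : Measure Ω} [IsFiniteMeasure P] {S : ℝ → Ω → ℝ}

lemma sum_meanVarTerm_le_meanVar_dyadicPartition (hS : ∀ t ∈ Icc (0:ℝ) 1, Integrable (S t) P)
    {n m : ℕ} {J : ℕ → ℕ} (hJ : MonotoneOn J (Iic m)) (h0 : J 0 = 0) (hm : J m = 2 ^ n) :
    ∑ i ∈ Finset.range m, meanVarTerm ℱ P S (J i / 2 ^ n) (J (i + 1) / 2 ^ n) ≤
      meanVar ℱ P S (dyadicPartition n) := by
  have h := sum_meanVarTerm_comp_le (ℱ := ℱ) (a := fun k : ℕ => (k : ℝ) / 2 ^ n)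
    (fun _ _ h => div_le_div_of_nonneg_right (by exact_mod_cast h) (by positivity)) hJ
    fun k hk => hS _ (natCast_div_two_pow_mem_Icc (hk.trans_eq hm))
  rwa [h0, hm, ← Finset.range_eq_Ico, ← meanVar_dyadicPartition] at h

lemma meanVar_dyadicPartition_le_succ (hS : ∀ t ∈ Icc (0:ℝ) 1, Integrable (S t) P) (n : ℕ) :
    meanVar ℱ P S (dyadicPartition n) ≤ meanVar ℱ P S (dyadicPartition (n + 1)) := by
  have h := sum_meanVarTerm_le_meanVar_dyadicPartition (ℱ := ℱ) hS (n := n + 1) (m := 2 ^ n)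
    (J := fun i => 2 * i) (fun _ _ _ _ h => Nat.mul_le_mul_left 2 h) rfl (by ring)
  have hdiv : ∀ i : ℕ, ((2 * i : ℕ) : ℝ) / 2 ^ (n + 1) = i / 2 ^ n := fun i => by
    push_cast
    rw [pow_succ]
    field_simp
  simpa only [hdiv, meanVar_dyadicPartition] using h

lemma ofReal_meanVar_le_iSup_dyadicPartition {C : ℝ} (hC : ∀ t ω, |S t ω| ≤ C)
    (hS : ∀ t ∈ Icc (0:ℝ) 1, Integrable (S t) P)
    (hright : ∀ ω, ∀ t ∈ Ico (0:ℝ) 1, ContinuousWithinAt (fun s => S s ω) (Ici t) t)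
    (π : Partition) :
    ENNReal.ofReal (meanVar ℱ P S π) ≤ ⨆ n, ENNReal.ofReal (meanVar ℱ P S (dyadicPartition n)) := by
  set x := π.point
  set J : ℕ → ℕ → ℕ := fun n k => ⌈x k * 2 ^ n⌉₊
  set d : ℕ → ℕ → ℝ := fun n k => ∫ ω, |S (x k) ω - S (J n k / 2 ^ n) ω| ∂P
  have hJ_mem : ∀ n k, (J n k : ℝ) / 2 ^ n ∈ Icc (x k) 1 := fun n k =>
    natCeil_mul_two_pow_div_mem_Icc (π.point_mem_Icc k) n
  have hSJ : ∀ n k, Integrable (S (J n k / 2 ^ n)) P := fun n k =>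
    hS _ (Icc_subset_Icc_left (π.point_mem_Icc k).1 (hJ_mem n k))
  have hSx : ∀ k, Integrable (S (x k)) P := fun k => hS _ (π.point_mem_Icc k)
  refine ofReal_le_iSup_of_le_add (e := fun n => ∑ k ∈ Finset.range π.n, (d n (k + 1) + d n k))
    (fun n => ?_) ?_
  · have hJ_mono : MonotoneOn (J n) (Iic π.n) := fun k _ l _ hkl =>
      Nat.ceil_mono (mul_le_mul_of_nonneg_right (π.monotone_point hkl) (by positivity))
    have hJ0 : J n 0 = 0 := by simp [J, x, π.point_zero]
    have hJn : J n π.n = 2 ^ n := by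
      simpa [J, x, π.point_of_le le_rfl] using Nat.ceil_natCast (R := ℝ) (2 ^ n)
    calc meanVar ℱ P S π
        = ∑ k ∈ Finset.range π.n, meanVarTerm ℱ P S (x k) (x (k + 1)) := meanVar_eq_sum_range π
      _ ≤ ∑ k ∈ Finset.range π.n, (meanVarTerm ℱ P S (J n k / 2 ^ n) (J n (k + 1) / 2 ^ n)
            + (d n (k + 1) + d n k)) := Finset.sum_le_sum fun k _ =>
          (meanVarTerm_le_add_integral_abs_sub (hJ_mem n k).1 (hSx k) (hSx (k + 1)) (hSJ n k)
            (hSJ n (k + 1))).trans_eq (add_assoc _ _ _)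
      _ ≤ meanVar ℱ P S (dyadicPartition n) + ∑ k ∈ Finset.range π.n, (d n (k + 1) + d n k) := by
          rw [Finset.sum_add_distrib]
          exact add_le_add (sum_meanVarTerm_le_meanVar_dyadicPartition hS hJ_mono hJ0 hJn) le_rfl
  · have hd : ∀ k, Tendsto (fun n => d n k) atTop (𝓝 0) := fun k =>
      tendsto_integral_abs_sub_of_tendsto (fun n => (hSJ n k).1) (hSx k).1 (fun _ => hC _)
        (hC _) (ae_of_all _ fun ω =>
          (continuousWithinAt_Icc_one_of_right (hright ω) (π.point_mem_Icc k)).tendsto.comp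
            (tendsto_natCeil_mul_two_pow_div (π.point_mem_Icc k)))
    simpa using tendsto_finsetSum _ fun k _ => (hd (k + 1)).add (hd k)

end Dyadic

theorem meanVar_tendsto_iSup_general
    (ℱ : Filtration ℝ m0) (P : Measure Ω) [IsProbabilityMeasure P]
    (S : ℝ → Ω → ℝ)
    (hS_bdd : ∃ C : ℝ, ∀ t ω, |S t ω| ≤ C)
    (hS_cadlag : Cadlag S) (hS_adapted : AdaptedOn ℱ S) :
    Tendsto (fun n : ℕ => ENNReal.ofReal (meanVar ℱ P S (dyadicPartition n))) atTop
      (nhds (⨆ π : Partition, ENNReal.ofReal (meanVar ℱ P S π))) := by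
  obtain ⟨C, hC⟩ := hS_bdd
  have hS : ∀ t ∈ Icc (0:ℝ) 1, Integrable (S t) P := fun t ht =>
    .of_bound ((hS_adapted t ht).mono (ℱ.le t)).aestronglyMeasurable C
      (ae_of_all _ fun ω => (Real.norm_eq_abs _).trans_le (hC t ω))
  have hmono : Monotone fun n => ENNReal.ofReal (meanVar ℱ P S (dyadicPartition n)) :=
    monotone_nat_of_le_succ fun n =>
      ENNReal.ofReal_le_ofReal (meanVar_dyadicPartition_le_succ hS n)
  have hsup : ⨆ n, ENNReal.ofReal (meanVar ℱ P S (dyadicPartition n)) =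
      ⨆ π : Partition, ENNReal.ofReal (meanVar ℱ P S π) :=
    le_antisymm (iSup_le fun n => le_iSup (fun π => ENNReal.ofReal (meanVar ℱ P S π)) _)
      (iSup_le (ofReal_meanVar_le_iSup_dyadicPartition hC hS fun ω => (hS_cadlag ω).1))
  exact hsup ▸ tendsto_atTop_iSup hmono

/-- For a bounded càdlàg adapted process, the mean variation (the supremum
over all partitions) is the limit of the mean variations along the dyadic partitions. -/
theorem meanVar_tendsto_iSup
    (ℱ : Filtration ℝ m0) (P : Measure Ω) [IsProbabilityMeasure P]
    (hUC : UsualConditions ℱ P) (S : ℝ → Ω → ℝ)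
    (hS_bdd : ∃ C : ℝ, ∀ t ω, |S t ω| ≤ C)
    (hS_cadlag : Cadlag S) (hS_adapted : AdaptedOn ℱ S) :
    Tendsto (fun n : ℕ => ENNReal.ofReal (meanVar ℱ P S (dyadicPartition n))) atTop
      (nhds (⨆ π : Partition, ENNReal.ofReal (meanVar ℱ P S π))) :=
  meanVar_tendsto_iSup_general ℱ P S hS_bdd hS_cadlag hS_adapted

end BD
end
end

section
/- Let M = (M_t)_{t∈[0,1]} be a càdlàg square-integrable martingale, i.e. a martingale with E[M_t^2] < ∞ for all t. Then M is a good integrator: if (H^n) are simple integrands with ‖H^n‖_∞ → 0, then I_M(H^n) → 0 in probability (indeed E[I_M(H)^2] ≤ ‖H‖_∞^2 · E[M_1^2 − M_0^2] for every simple integrand H). -/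
open MeasureTheory Set Filter Topology

noncomputable section

namespace BD

variable {Ω : Type*} {m0 : MeasurableSpace Ω}

/-!
Put `X i = M (τ i)`. Optional sampling gives `X i = E[M 1 | ℱ_{τ i}]`, so the increments of `X`
are orthogonal in `L²` and `I_M(H) = ∑ H^i (X (i+1) - X i)` is a discrete martingale transform:
`E[I_M(H)²] = ∑ E[(H^i)² (X (i+1) - X i)²] ≤ c² (E[X k²] - E[X 0²]) ≤ c² E[M 1² - M 0²]`, the
last step because conditional expectation contracts `L²` and `M 0 = E[X 0 | ℱ 0]`.
This `L²` bound makes `I_M` continuous into `L⁰`.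

Optional sampling at a general `[0,1]`-valued stopping time `τ` is obtained from the dyadic
approximations `ρₙ = ⌈2ⁿ τ⌉ / 2ⁿ ↓ τ`, which take countably many values: right-continuous paths
give `M (ρₙ) → M τ` pointwise, the conditional expectations `E[M 1 | ℱ_{ρₙ}]` are uniformly
integrable, and right continuity together with completeness of the filtration make the limit
`ℱ_τ`-measurable.
-/

section L2

variable {P : Measure Ω} {m : MeasurableSpace Ω}

lemma integral_mul_eq_zero_of_condExp_eq_zero [IsFiniteMeasure P] (hm : m ≤ m0)
    {Y X : Ω → ℝ} (hY : AEStronglyMeasurable[m] Y P) (hX : Integrable X P)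
    (hYX : Integrable (Y * X) P) (hXm : P[X|m] =ᵐ[P] 0) : ∫ ω, Y ω * X ω ∂P = 0 := by
  have hzero : P[Y * X|m] =ᵐ[P] 0 := by
    filter_upwards [condExp_mul_of_aestronglyMeasurable_left hY hYX hX, hXm] with ω h1 h2
    simp [h1, h2]
  calc ∫ ω, Y ω * X ω ∂P = ∫ ω, (P[Y * X|m]) ω ∂P := (integral_condExp hm).symm
    _ = 0 := by simp [integral_congr_ae hzero]

lemma integral_sq_eq_integral_sq_add_integral_sq_sub [IsFiniteMeasure P] (hm : m ≤ m0)
    {Z W : Ω → ℝ} (hZ : MemLp Z 2 P) (hW : W =ᵐ[P] P[Z|m]) :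
    ∫ ω, Z ω ^ 2 ∂P = ∫ ω, W ω ^ 2 ∂P + ∫ ω, (Z ω - W ω) ^ 2 ∂P := by
  have hW2 : MemLp W 2 P := (hZ.condExp one_le_two).ae_eq hW.symm
  have hZW : MemLp (Z - W) 2 P := hZ.sub hW2
  have hcond : P[Z - W|m] =ᵐ[P] 0 := by
    have hWW : P[W|m] =ᵐ[P] W :=
      (condExp_congr_ae hW).trans ((condExp_condExp_of_le le_rfl hm).trans hW.symm)
    filter_upwards [condExp_sub (hZ.integrable one_le_two) (hW2.integrable one_le_two) m, hW,
      hWW] with ω h1 h2 h3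
    simp [h1, h2, h3]
  have hW2i : Integrable (fun ω => W ω ^ 2) P := hW2.integrable_sq
  have hZW2i : Integrable (fun ω => (Z ω - W ω) ^ 2) P := hZW.integrable_sq
  have hWZWi : Integrable (fun ω => W ω * (Z ω - W ω)) P := hW2.integrable_mul hZW
  have horth : ∫ ω, W ω * (Z ω - W ω) ∂P = 0 :=
    integral_mul_eq_zero_of_condExp_eq_zero hm ⟨_, stronglyMeasurable_condExp, hW⟩
      (hZW.integrable one_le_two) hWZWi hcond
  have hexpand : ∀ ω, Z ω ^ 2 = W ω ^ 2 + (Z ω - W ω) ^ 2 + 2 * (W ω * (Z ω - W ω)) :=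
    fun ω => by ring
  simp_rw [hexpand]
  have hsum : Integrable (fun ω => W ω ^ 2 + (Z ω - W ω) ^ 2) P := hW2i.add hZW2i
  rw [integral_add hsum (hWZWi.const_mul 2), integral_add hW2i hZW2i,
    integral_const_mul, horth, mul_zero, add_zero]

lemma integral_sq_le_of_ae_eq_condExp [IsFiniteMeasure P] (hm : m ≤ m0) {Z W : Ω → ℝ}
    (hZ : MemLp Z 2 P) (hW : W =ᵐ[P] P[Z|m]) : ∫ ω, W ω ^ 2 ∂P ≤ ∫ ω, Z ω ^ 2 ∂P := by
  rw [integral_sq_eq_integral_sq_add_integral_sq_sub hm hZ hW]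
  exact le_add_of_nonneg_right (integral_nonneg fun ω => sq_nonneg _)

lemma integral_sq_sum_eq_sum_integral_sq {ι : Type*} (s : Finset ι) {f : ι → Ω → ℝ}
    (hf : ∀ i, MemLp (f i) 2 P)
    (horth : ∀ i ∈ s, ∀ j ∈ s, i ≠ j → ∫ ω, f i ω * f j ω ∂P = 0) :
    ∫ ω, (∑ i ∈ s, f i ω) ^ 2 ∂P = ∑ i ∈ s, ∫ ω, f i ω ^ 2 ∂P := by
  have hint : ∀ i j, Integrable (fun ω => f i ω * f j ω) P := fun i j =>
    (hf i).integrable_mul (hf j)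
  simp_rw [sq, Finset.sum_mul_sum]
  rw [integral_finsetSum _ fun i _ => integrable_finsetSum _ fun j _ => hint i j]
  refine Finset.sum_congr rfl fun i hi => ?_
  rw [integral_finsetSum _ fun j _ => hint i j,
    Finset.sum_eq_single_of_mem i hi fun j hj hji => horth i hi j hj hji.symm]

end L2

lemma eLpNorm_two_eq_ofReal_sqrt_integral_sq {P : Measure Ω} {f : Ω → ℝ} (hf : MemLp f 2 P) :
    eLpNorm f 2 P = ENNReal.ofReal √(∫ ω, f ω ^ 2 ∂P) := by
  rw [hf.eLpNorm_eq_integral_rpow_norm two_ne_zero ENNReal.ofNat_ne_top, Real.sqrt_eq_rpow]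
  simp [one_div]

lemma tendstoInMeasure_zero_of_integral_sq_le {P : Measure Ω} {f : ℕ → Ω → ℝ} {a : ℕ → ℝ}
    (hf : ∀ n, MemLp (f n) 2 P) (hfa : ∀ n, ∫ ω, f n ω ^ 2 ∂P ≤ a n)
    (ha : Tendsto a atTop (𝓝 0)) : TendstoInMeasure P f atTop 0 := by
  refine tendstoInMeasure_of_tendsto_eLpNorm two_ne_zero (fun n => (hf n).1)
    aestronglyMeasurable_const ?_
  have hlim : Tendsto (fun n => ENNReal.ofReal √(a n)) atTop (𝓝 0) := by
    simpa [Function.comp_def] using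
      ((ENNReal.continuous_ofReal.comp Real.continuous_sqrt).tendsto 0).comp ha
  refine tendsto_of_tendsto_of_tendsto_of_le_of_le tendsto_const_nhds hlim (fun _ => zero_le)
    fun n => ?_
  rw [sub_zero, eLpNorm_two_eq_ofReal_sqrt_integral_sq (hf n)]
  exact ENNReal.ofReal_le_ofReal (Real.sqrt_le_sqrt (hfa n))

section Limits

variable {P : Measure Ω} {f : ℕ → Ω → ℝ} {g : Ω → ℝ}

lemma aestronglyMeasurable_iInf_of_tendsto {m : ℕ → MeasurableSpace Ω} (hm : Antitone m)
    (hnull : ∀ s, P s = 0 → ∀ n, MeasurableSet[m n] s)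
    (hf : ∀ n, AEStronglyMeasurable[m n] (f n) P)
    (hfg : ∀ᵐ ω ∂P, Tendsto (fun n => f n ω) atTop (𝓝 (g ω))) :
    AEStronglyMeasurable[⨅ n, m n] g P := by
  set f' := fun n => (hf n).mk (f n)
  set B := {ω | ¬Tendsto (fun n => f' n ω) atTop (𝓝 (g ω))}
  have hB : P B = 0 := by
    refine measure_eq_zero_iff_ae_notMem.mpr ?_
    filter_upwards [hfg, ae_all_iff.mpr fun n => (hf n).ae_eq_mk] with ω hω hω'
    simpa [B, f', ← funext hω'] using hω
  have hmeas : ∀ k, StronglyMeasurable[m k] (Bᶜ.indicator g) := fun k => by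
    refine stronglyMeasurable_of_tendsto (f := fun n => Bᶜ.indicator (f' (n + k))) atTop
      (fun n => ((hf _).stronglyMeasurable_mk.mono (hm (Nat.le_add_left k n))).indicator
        (hnull B hB k).compl) (tendsto_pi_nhds.mpr fun ω => ?_)
    by_cases hω : ω ∈ B
    · simp [hω]
    · simpa [hω, Function.comp_def] using (not_not.mp hω).comp (tendsto_add_atTop_nat k)
  refine ⟨Bᶜ.indicator g, ?_, ?_⟩
  · refine Measurable.stronglyMeasurable fun t ht => ?_
    exact MeasurableSpace.measurableSet_iInf.mpr fun k => (hmeas k).measurable ht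
  · filter_upwards [measure_eq_zero_iff_ae_notMem.mp hB] with ω hω
    simp [hω]

lemma ae_eq_condExp_of_tendsto [IsFiniteMeasure P] {m : MeasurableSpace Ω}
    {mn : ℕ → MeasurableSpace Ω} (hmn : ∀ n, mn n ≤ m0) (hm : ∀ n, m ≤ mn n) {Z : Ω → ℝ}
    (hZ : Integrable Z P) (hf : ∀ n, f n =ᵐ[P] P[Z|mn n])
    (hfg : ∀ᵐ ω ∂P, Tendsto (fun n => f n ω) atTop (𝓝 (g ω)))
    (hg : AEStronglyMeasurable[m] g P) : g =ᵐ[P] P[Z|m] := by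
  have hm0 : m ≤ m0 := (hm 0).trans (hmn 0)
  have hUI : UniformIntegrable f 1 P :=
    (hZ.uniformIntegrable_condExp hmn).ae_eq fun n => (hf n).symm
  have hg_int : Integrable g P := hUI.integrable_of_ae_tendsto hfg
  have hL1 : Tendsto (fun n => eLpNorm (f n - g) 1 P) atTop (𝓝 0) :=
    tendsto_Lp_finite_of_tendsto_ae le_rfl ENNReal.one_ne_top hUI.1
      (memLp_one_iff_integrable.mpr hg_int) hUI.2.1 hfg
  refine ae_eq_condExp_of_forall_setIntegral_eq hm0 hZ (fun s _ _ => hg_int.integrableOn)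
    (fun s hs _ => ?_) hg
  have hfs : ∀ n, ∫ ω in s, f n ω ∂P = ∫ ω in s, Z ω ∂P := fun n =>
    (setIntegral_congr_ae (hm0 s hs) ((hf n).mono fun ω hω _ => hω)).trans
      (setIntegral_condExp (hmn n) hZ (hm n s hs))
  exact tendsto_nhds_unique (tendsto_setIntegral_of_L1' g hg_int.1
    (Eventually.of_forall fun n => (hUI.memLp n).integrable le_rfl) hL1 s)
    (by simp only [hfs, tendsto_const_nhds])

end Limits

lemma sum_fin_succ_sub_castSucc {k : ℕ} (u : Fin (k + 1) → ℝ) :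
    ∑ i : Fin k, (u i.succ - u i.castSucc) = u (Fin.last k) - u 0 := by
  induction k with
  | zero => simp
  | succ k ih =>
    rw [Fin.sum_univ_castSucc]
    simp only [Fin.succ_castSucc]
    rw [ih fun i => u i.castSucc]
    simp

section MartingaleTransform

variable {P : Measure Ω} [IsFiniteMeasure P] {k : ℕ} {𝒢 : Fin (k + 1) → MeasurableSpace Ω}
  {Z : Ω → ℝ} {X : Fin (k + 1) → Ω → ℝ}

lemma ae_eq_condExp_of_le (h𝒢 : Monotone 𝒢) (h𝒢m : ∀ i, 𝒢 i ≤ m0)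
    (hX : ∀ i, X i =ᵐ[P] P[Z|𝒢 i]) {i j : Fin (k + 1)} (hij : i ≤ j) :
    X i =ᵐ[P] P[X j|𝒢 i] :=
  (hX i).trans ((condExp_condExp_of_le (h𝒢 hij) (h𝒢m j)).symm.trans
    (condExp_congr_ae (hX j)).symm)

lemma condExp_sub_castSucc_ae_eq_zero (h𝒢 : Monotone 𝒢) (h𝒢m : ∀ i, 𝒢 i ≤ m0)
    (hX : ∀ i, X i =ᵐ[P] P[Z|𝒢 i]) (i : Fin k) :
    P[X i.succ - X i.castSucc|𝒢 i.castSucc] =ᵐ[P] 0 := by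
  have hXi : ∀ j, Integrable (X j) P := fun j => integrable_condExp.congr (hX j).symm
  filter_upwards [condExp_sub (hXi i.succ) (hXi i.castSucc) (𝒢 i.castSucc),
    ae_eq_condExp_of_le h𝒢 h𝒢m hX (Fin.castSucc_lt_succ (i := i)).le,
    ae_eq_condExp_of_le h𝒢 h𝒢m hX (le_refl i.castSucc)] with ω h1 h2 h3
  simp [h1, ← h2, ← h3]

lemma integral_sq_sub_castSucc (h𝒢 : Monotone 𝒢) (h𝒢m : ∀ i, 𝒢 i ≤ m0) (hZ : MemLp Z 2 P)
    (hX : ∀ i, X i =ᵐ[P] P[Z|𝒢 i]) (i : Fin k) :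
    ∫ ω, (X i.succ ω - X i.castSucc ω) ^ 2 ∂P =
      ∫ ω, X i.succ ω ^ 2 ∂P - ∫ ω, X i.castSucc ω ^ 2 ∂P := by
  rw [integral_sq_eq_integral_sq_add_integral_sq_sub (h𝒢m i.castSucc)
    ((hZ.condExp one_le_two).ae_eq (hX i.succ).symm)
    (ae_eq_condExp_of_le h𝒢 h𝒢m hX (Fin.castSucc_lt_succ (i := i)).le)]
  ring

lemma integral_mul_sub_castSucc_eq_zero (h𝒢 : Monotone 𝒢) (h𝒢m : ∀ i, 𝒢 i ≤ m0)
    (hX : ∀ i, X i =ᵐ[P] P[Z|𝒢 i]) {H : Fin k → Ω → ℝ}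
    (hH : ∀ i, StronglyMeasurable[𝒢 i.castSucc] (H i))
    (hHX : ∀ i, MemLp (fun ω => H i ω * (X i.succ ω - X i.castSucc ω)) 2 P)
    {i j : Fin k} (hij : i < j) :
    ∫ ω, H i ω * (X i.succ ω - X i.castSucc ω) * (H j ω * (X j.succ ω - X j.castSucc ω)) ∂P
      = 0 := by
  have hXm : ∀ l, AEStronglyMeasurable[𝒢 l] (X l) P :=
    fun l => ⟨_, stronglyMeasurable_condExp, hX l⟩
  have hY : AEStronglyMeasurable[𝒢 j.castSucc]
      (fun ω => H i ω * (X i.succ ω - X i.castSucc ω) * H j ω) P := by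
    have hi : i.castSucc ≤ j.castSucc := Fin.castSucc_le_castSucc_iff.mpr hij.le
    have hi' : i.succ ≤ j.castSucc := Fin.succ_le_castSucc_iff.mpr hij
    exact ((((hH i).mono (h𝒢 hi)).aestronglyMeasurable.mul
      (((hXm _).mono (h𝒢 hi')).sub ((hXm _).mono (h𝒢 hi))))).mul
      (hH j).aestronglyMeasurable
  have hYX : Integrable ((fun ω => H i ω * (X i.succ ω - X i.castSucc ω) * H j ω) *
      (X j.succ - X j.castSucc)) P := by
    refine ((hHX i).integrable_mul (hHX j)).congr (ae_of_all _ fun ω => ?_)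
    simp only [Pi.mul_apply, Pi.sub_apply]
    ring
  have h := integral_mul_eq_zero_of_condExp_eq_zero (h𝒢m j.castSucc) hY
    ((integrable_condExp.congr (hX j.succ).symm).sub (integrable_condExp.congr (hX _).symm))
    hYX (condExp_sub_castSucc_ae_eq_zero h𝒢 h𝒢m hX j)
  rw [← h]
  congr 1 with ω
  simp only [Pi.sub_apply]
  ring

theorem integral_sq_sum_mul_sub_castSucc_le (h𝒢 : Monotone 𝒢) (h𝒢m : ∀ i, 𝒢 i ≤ m0)
    (hZ : MemLp Z 2 P) (hX : ∀ i, X i =ᵐ[P] P[Z|𝒢 i]) {H : Fin k → Ω → ℝ}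
    (hH : ∀ i, StronglyMeasurable[𝒢 i.castSucc] (H i)) {c : ℝ}
    (hHc : ∀ i ω, |H i ω * (X i.succ ω - X i.castSucc ω)| ≤ c * |X i.succ ω - X i.castSucc ω|) :
    MemLp (fun ω => ∑ i, H i ω * (X i.succ ω - X i.castSucc ω)) 2 P ∧
      ∫ ω, (∑ i, H i ω * (X i.succ ω - X i.castSucc ω)) ^ 2 ∂P ≤
        c ^ 2 * (∫ ω, X (Fin.last k) ω ^ 2 ∂P - ∫ ω, X 0 ω ^ 2 ∂P) := by
  have hX2 : ∀ l, MemLp (X l) 2 P := fun l => (hZ.condExp one_le_two).ae_eq (hX l).symm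
  have hD2 : ∀ i : Fin k, MemLp (fun ω => X i.succ ω - X i.castSucc ω) 2 P :=
    fun i => (hX2 _).sub (hX2 _)
  have hHX : ∀ i, MemLp (fun ω => H i ω * (X i.succ ω - X i.castSucc ω)) 2 P := fun i =>
    (hD2 i).of_le_mul (((hH i).mono (h𝒢m _)).aestronglyMeasurable.mul (hD2 i).1)
      (ae_of_all _ fun ω => by simpa only [Real.norm_eq_abs] using hHc i ω)
  refine ⟨memLp_finsetSum _ fun i _ => hHX i, ?_⟩
  calc ∫ ω, (∑ i, H i ω * (X i.succ ω - X i.castSucc ω)) ^ 2 ∂P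
      = ∑ i, ∫ ω, (H i ω * (X i.succ ω - X i.castSucc ω)) ^ 2 ∂P := by
        refine integral_sq_sum_eq_sum_integral_sq Finset.univ hHX fun i _ j _ hij => ?_
        rcases hij.lt_or_gt with hij | hji
        · exact integral_mul_sub_castSucc_eq_zero h𝒢 h𝒢m hX hH hHX hij
        · simpa only [mul_comm] using integral_mul_sub_castSucc_eq_zero h𝒢 h𝒢m hX hH hHX hji
    _ ≤ ∑ i : Fin k, c ^ 2 * ∫ ω, (X i.succ ω - X i.castSucc ω) ^ 2 ∂P := by
        refine Finset.sum_le_sum fun i _ => ?_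
        rw [← integral_const_mul]
        refine integral_mono (hHX i).integrable_sq ((hD2 i).integrable_sq.const_mul _)
          fun ω => ?_
        calc (H i ω * (X i.succ ω - X i.castSucc ω)) ^ 2
            = |H i ω * (X i.succ ω - X i.castSucc ω)| ^ 2 := (sq_abs _).symm
          _ ≤ (c * |X i.succ ω - X i.castSucc ω|) ^ 2 :=
            pow_le_pow_left₀ (abs_nonneg _) (hHc i ω) 2
          _ = c ^ 2 * (X i.succ ω - X i.castSucc ω) ^ 2 := by rw [mul_pow, sq_abs]
    _ = c ^ 2 * (∫ ω, X (Fin.last k) ω ^ 2 ∂P - ∫ ω, X 0 ω ^ 2 ∂P) := by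
        rw [← Finset.mul_sum, ← sum_fin_succ_sub_castSucc fun l => ∫ ω, X l ω ^ 2 ∂P]
        simp_rw [integral_sq_sub_castSucc h𝒢 h𝒢m hZ hX]

end MartingaleTransform

def dyadicCeil (n : ℕ) (x : ℝ) : ℝ := ⌈2 ^ n * x⌉ / 2 ^ n

section DyadicCeil

variable {n : ℕ} {x : ℝ}

lemma le_dyadicCeil : x ≤ dyadicCeil n x := by
  rw [dyadicCeil, le_div_iff₀ (by positivity), mul_comm]
  exact Int.le_ceil _

lemma dyadicCeil_le_add : dyadicCeil n x ≤ x + (2 ^ n)⁻¹ := by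
  rw [dyadicCeil, div_le_iff₀ (by positivity), add_mul, inv_mul_cancel₀ (by positivity),
    mul_comm]
  exact (Int.ceil_lt_add_one _).le

lemma dyadicCeil_le_iff {t : ℝ} : dyadicCeil n x ≤ t ↔ x ≤ ⌊2 ^ n * t⌋ / 2 ^ n := by
  rw [dyadicCeil, div_le_iff₀ (by positivity), le_div_iff₀ (by positivity), mul_comm t,
    ← Int.le_floor, Int.ceil_le, mul_comm]

lemma dyadicCeil_le_of_le {z : ℤ} (h : x ≤ z / 2 ^ n) : dyadicCeil n x ≤ z / 2 ^ n := by
  rw [le_div_iff₀ (by positivity), mul_comm] at h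
  exact div_le_div_of_nonneg_right (Int.cast_le.mpr (Int.ceil_le.mpr h)) (by positivity)

lemma floor_two_pow_mul_div_le (t : ℝ) : (⌊2 ^ n * t⌋ : ℝ) / 2 ^ n ≤ t := by
  rw [div_le_iff₀ (by positivity), mul_comm]
  exact Int.floor_le _

lemma dyadicCeil_mem_Icc (hx : x ∈ Icc (0 : ℝ) 1) : dyadicCeil n x ∈ Icc (0 : ℝ) 1 :=
  ⟨hx.1.trans le_dyadicCeil, by
    simpa using dyadicCeil_le_of_le (n := n) (z := 2 ^ n) (by simpa using hx.2)⟩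

lemma antitone_dyadicCeil (x : ℝ) : Antitone fun n => dyadicCeil n x := by
  refine antitone_nat_of_succ_le fun n => ?_
  have h : dyadicCeil n x = ((2 * ⌈2 ^ n * x⌉ : ℤ) : ℝ) / 2 ^ (n + 1) := by
    rw [dyadicCeil, pow_succ]
    push_cast
    field_simp
  exact h ▸ dyadicCeil_le_of_le (h ▸ le_dyadicCeil)

lemma tendsto_inv_two_pow : Tendsto (fun n : ℕ => ((2 : ℝ) ^ n)⁻¹) atTop (𝓝 0) :=
  tendsto_inv_atTop_zero.comp (tendsto_pow_atTop_atTop_of_one_lt one_lt_two)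

lemma tendsto_dyadicCeil (hx : x ∈ Icc (0 : ℝ) 1) :
    Tendsto (fun n => dyadicCeil n x) atTop (𝓝[Icc x 1] x) := by
  refine tendsto_nhdsWithin_iff.mpr ⟨?_, Eventually.of_forall fun n =>
    ⟨le_dyadicCeil, (dyadicCeil_mem_Icc hx).2⟩⟩
  exact tendsto_of_tendsto_of_tendsto_of_le_of_le tendsto_const_nhds
    (by simpa using tendsto_inv_two_pow.const_add x) (fun _ => le_dyadicCeil)
    fun _ => dyadicCeil_le_add

lemma le_iff_forall_dyadicCeil_le (N : ℕ) {t : ℝ} :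
    x ≤ t ↔ ∀ n ≥ N, dyadicCeil n x ≤ t + (2 ^ n)⁻¹ := by
  refine ⟨fun h n _ => dyadicCeil_le_add.trans (by linarith), fun h => ?_⟩
  exact ge_of_tendsto (by simpa using tendsto_inv_two_pow.const_add t)
    (eventually_atTop.mpr ⟨N, fun n hn => le_dyadicCeil.trans (h n hn)⟩)

lemma countable_range_dyadicCeil_comp {α : Type*} (n : ℕ) (τ : α → ℝ) :
    (range fun a => dyadicCeil n (τ a)).Countable :=
  (countable_range fun z : ℤ => (z : ℝ) / 2 ^ n).mono <| by
    rintro _ ⟨a, rfl⟩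
    exact ⟨_, rfl⟩

end DyadicCeil

lemma isStoppingTime_dyadicCeil {f : Filtration ℝ m0} {τ : Ω → ℝ}
    (hτ : IsStoppingTime f fun ω => (τ ω : WithTop ℝ)) (n : ℕ) :
    IsStoppingTime f fun ω => (dyadicCeil n (τ ω) : WithTop ℝ) := by
  intro t
  simp only [WithTop.coe_le_coe, dyadicCeil_le_iff]
  exact f.mono (floor_two_pow_mul_div_le t) _ (by simpa using hτ (⌊2 ^ n * t⌋ / 2 ^ n))

lemma measurableSet_inter_le_of_le_on_Icc {f g : Filtration ℝ m0}
    (hfg : ∀ t ∈ Icc (0 : ℝ) 1, f t ≤ g t) {τ : Ω → ℝ} (hτ : ∀ ω, τ ω ∈ Icc (0 : ℝ) 1)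
    {s : Set Ω} (hs : ∀ t ∈ Icc (0 : ℝ) 1, MeasurableSet[f t] (s ∩ {ω | τ ω ≤ t})) (t : ℝ) :
    MeasurableSet[g t] (s ∩ {ω | τ ω ≤ t}) := by
  rcases lt_or_ge t 0 with ht₀ | ht₀
  · convert @MeasurableSet.empty _ (g t)
    exact eq_empty_iff_forall_notMem.mpr fun ω hω => ht₀.not_ge ((hτ ω).1.trans hω.2)
  rcases le_or_gt t 1 with ht₁ | ht₁
  · exact hfg t ⟨ht₀, ht₁⟩ _ (hs t ⟨ht₀, ht₁⟩)
  · have hset : s ∩ {ω | τ ω ≤ t} = s ∩ {ω | τ ω ≤ 1} := by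
      ext ω
      simp [(hτ ω).2, (hτ ω).2.trans ht₁.le]
    rw [hset]
    exact g.mono ht₁.le _ (hfg 1 (right_mem_Icc.mpr zero_le_one) _
      (hs 1 (right_mem_Icc.mpr zero_le_one)))

lemma measurableSet_stoppingTime_iff_of_mem_Icc {f : Filtration ℝ m0} {τ : Ω → ℝ}
    (hτ : IsStoppingTime f fun ω => (τ ω : WithTop ℝ)) (h01 : ∀ ω, τ ω ∈ Icc (0 : ℝ) 1)
    (s : Set Ω) :
    MeasurableSet[hτ.measurableSpace] s ↔
      ∀ t ∈ Icc (0 : ℝ) 1, MeasurableSet[f t] (s ∩ {ω | τ ω ≤ t}) := by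
  simp only [IsStoppingTime.measurableSet, WithTop.coe_le_coe]
  refine ⟨fun h t _ => h.2 t, fun h => ⟨?_, measurableSet_inter_le_of_le_on_Icc
    (fun _ _ => le_rfl) h01 h⟩⟩
  have hs : s ∩ {ω | τ ω ≤ 1} = s := inter_eq_left.mpr fun ω _ => (h01 ω).2
  exact le_iSup f 1 _ (hs ▸ h 1 (right_mem_Icc.mpr zero_le_one))

lemma RightContinuousFiltration.measurableSet_of_forall_gt {ℱ : Filtration ℝ m0}
    (hℱ : RightContinuousFiltration ℱ) {t : ℝ} {s : Set Ω}
    (hs : ∀ u > t, MeasurableSet[ℱ u] s) : MeasurableSet[ℱ t] s := by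
  rw [hℱ t]
  simpa only [MeasurableSpace.measurableSet_iInf, mem_Ioi] using hs

lemma iInf_measurableSpace_dyadicCeil_le {ℱ : Filtration ℝ m0}
    (hℱ : RightContinuousFiltration ℱ) {τ : Ω → ℝ}
    (hτ : IsStoppingTime ℱ fun ω => (τ ω : WithTop ℝ)) (h01 : ∀ ω, τ ω ∈ Icc (0 : ℝ) 1) :
    ⨅ n, (isStoppingTime_dyadicCeil hτ n).measurableSpace ≤ hτ.measurableSpace := by
  intro s hs
  simp only [MeasurableSpace.measurableSet_iInf, IsStoppingTime.measurableSet,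
    WithTop.coe_le_coe] at hs
  refine (measurableSet_stoppingTime_iff_of_mem_Icc hτ h01 s).mpr fun t _ =>
    hℱ.measurableSet_of_forall_gt fun u hu => ?_
  obtain ⟨N, hN⟩ : ∃ N : ℕ, ((2 : ℝ) ^ N)⁻¹ < u - t :=
    (tendsto_inv_two_pow.eventually (gt_mem_nhds (sub_pos.mpr hu))).exists
  have hset : s ∩ {ω | τ ω ≤ t} =
      ⋂ n ≥ N, s ∩ {ω | dyadicCeil n (τ ω) ≤ t + (2 ^ n)⁻¹} := by
    ext ω
    simp only [mem_inter_iff, mem_iInter, mem_ofPred_eq]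
    rw [le_iff_forall_dyadicCeil_le N]
    exact ⟨fun h n hn => ⟨h.1, h.2 n hn⟩, fun h => ⟨(h N le_rfl).1, fun n hn => (h n hn).2⟩⟩
  rw [hset]
  refine MeasurableSet.iInter fun n => MeasurableSet.iInter fun hn => ℱ.mono ?_ _ ((hs n).2 _)
  have : ((2 : ℝ) ^ n)⁻¹ ≤ (2 ^ N)⁻¹ :=
    inv_anti₀ (by positivity) (pow_le_pow_right₀ one_le_two hn)
  linarith

/-- Clamping time to `[0, 1]` turns a martingale on `[0, 1]` into one indexed by all of `ℝ`, as
Mathlib's optional sampling theorem requires. -/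
def clampedFiltration (ℱ : Filtration ℝ m0) : Filtration ℝ m0 where
  seq t := ℱ (projIcc (0 : ℝ) 1 zero_le_one t)
  mono' _ _ hst := ℱ.mono (monotone_projIcc _ hst)
  le' _ := ℱ.le _

lemma clampedFiltration_of_mem (ℱ : Filtration ℝ m0) {t : ℝ} (ht : t ∈ Icc (0 : ℝ) 1) :
    clampedFiltration ℱ t = ℱ t := by
  simp [clampedFiltration, projIcc_of_mem _ ht]

section ClampedFiltration

variable {ℱ : Filtration ℝ m0} {τ : Ω → ℝ}

lemma isStoppingTime_clampedFiltration (hτ : IsStoppingTime ℱ fun ω => (τ ω : WithTop ℝ))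
    (h01 : ∀ ω, τ ω ∈ Icc (0 : ℝ) 1) :
    IsStoppingTime (clampedFiltration ℱ) fun ω => (τ ω : WithTop ℝ) := by
  intro t
  simpa using measurableSet_inter_le_of_le_on_Icc (s := univ)
    (fun t ht => (clampedFiltration_of_mem ℱ ht).ge) h01
    (fun t _ => by simpa using hτ t) t

lemma measurableSpace_clampedFiltration
    (hτ : IsStoppingTime ℱ fun ω => (τ ω : WithTop ℝ)) (h01 : ∀ ω, τ ω ∈ Icc (0 : ℝ) 1) :
    (isStoppingTime_clampedFiltration hτ h01).measurableSpace = hτ.measurableSpace := by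
  ext s
  rw [measurableSet_stoppingTime_iff_of_mem_Icc _ h01,
    measurableSet_stoppingTime_iff_of_mem_Icc _ h01]
  exact forall₂_congr fun t ht => by rw [clampedFiltration_of_mem ℱ ht]

variable {P : Measure Ω} {M : ℝ → Ω → ℝ}

lemma MartingaleOn.martingale_clamped (hM : MartingaleOn ℱ P M) :
    Martingale (fun t => M (projIcc (0 : ℝ) 1 zero_le_one t)) (clampedFiltration ℱ) P :=
  ⟨fun _ => hM.1 _ (Subtype.prop _), fun _ _ hst =>
    hM.2.2 _ _ (Subtype.prop _) (Subtype.prop _) (monotone_projIcc _ hst)⟩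

lemma MartingaleOn.stoppedValue_ae_eq_condExp_of_countable_range [IsFiniteMeasure P]
    (hM : MartingaleOn ℱ P M) (hτ : IsStoppingTime ℱ fun ω => (τ ω : WithTop ℝ))
    (h01 : ∀ ω, τ ω ∈ Icc (0 : ℝ) 1) (hτc : (range τ).Countable) :
    (fun ω => M (τ ω) ω) =ᵐ[P] P[M 1|hτ.measurableSpace] := by
  have h := hM.martingale_clamped.stoppedValue_ae_eq_condExp_of_le_const_of_countable_range
    (isStoppingTime_clampedFiltration hτ h01) (n := 1) (fun ω => WithTop.coe_le_coe.mpr (h01 ω).2)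
    (by rw [show (fun ω => (τ ω : WithTop ℝ)) = (↑) ∘ τ from rfl, range_comp]
        exact hτc.image _)
  rw [measurableSpace_clampedFiltration hτ h01] at h
  convert h using 1
  · ext ω
    simp [stoppedValue, projIcc_of_mem _ (h01 ω)]
  · simp

end ClampedFiltration

lemma IsCadlagFun.continuousWithinAt_Icc {f : ℝ → ℝ} (hf : IsCadlagFun f) {x : ℝ}
    (hx : x ∈ Icc (0 : ℝ) 1) : ContinuousWithinAt f (Icc x 1) x := by
  rcases hx.2.lt_or_eq with h | rfl
  · exact (hf.1 x ⟨hx.1, h⟩).mono Icc_subset_Ici_self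
  · simp [continuousWithinAt_singleton]

theorem MartingaleOn.stoppedValue_ae_eq_condExp {ℱ : Filtration ℝ m0} {P : Measure Ω}
    [IsFiniteMeasure P] (hUC : UsualConditions ℱ P) {M : ℝ → Ω → ℝ} (hM_cadlag : Cadlag M)
    (hM : MartingaleOn ℱ P M) {τ : Ω → ℝ} (hτ : IsStoppingTime ℱ fun ω => (τ ω : WithTop ℝ))
    (h01 : ∀ ω, τ ω ∈ Icc (0 : ℝ) 1) :
    (fun ω => M (τ ω) ω) =ᵐ[P] P[M 1|hτ.measurableSpace] := by
  have hρ := isStoppingTime_dyadicCeil hτ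
  have hsample : ∀ n, (fun ω => M (dyadicCeil n (τ ω)) ω) =ᵐ[P]
      P[M 1|(hρ n).measurableSpace] := fun n =>
    hM.stoppedValue_ae_eq_condExp_of_countable_range (hρ n)
      (fun ω => dyadicCeil_mem_Icc (h01 ω)) (countable_range_dyadicCeil_comp n τ)
  have hconv : ∀ᵐ ω ∂P, Tendsto (fun n => M (dyadicCeil n (τ ω)) ω) atTop (𝓝 (M (τ ω) ω)) :=
    ae_of_all _ fun ω =>
      ((hM_cadlag ω).continuousWithinAt_Icc (h01 ω)).tendsto.comp (tendsto_dyadicCeil (h01 ω))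
  have hanti : Antitone fun n => (hρ n).measurableSpace := fun n k hnk =>
    IsStoppingTime.measurableSpace_mono _ _ fun ω =>
      WithTop.coe_le_coe.mpr (antitone_dyadicCeil (τ ω) hnk)
  have hnull : ∀ s, P s = 0 → ∀ n, MeasurableSet[(hρ n).measurableSpace] s := fun s hs n =>
    (hρ n).le_measurableSpace_of_const_le (i := 0)
      (fun ω => WithTop.coe_le_coe.mpr (dyadicCeil_mem_Icc (h01 ω)).1) _ (hUC.2 s hs)
  have hmeas : AEStronglyMeasurable[hτ.measurableSpace] (fun ω => M (τ ω) ω) P :=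
    (aestronglyMeasurable_iInf_of_tendsto hanti hnull
      (fun n => ⟨_, stronglyMeasurable_condExp, hsample n⟩) hconv).mono
      (iInf_measurableSpace_dyadicCeil_le hUC.1 hτ h01)
  exact ae_eq_condExp_of_tendsto
    (fun n => (hρ n).measurableSpace_le_of_le fun ω =>
      WithTop.coe_le_coe.mpr (dyadicCeil_mem_Icc (h01 ω)).2)
    (fun n => hτ.measurableSpace_mono (hρ n) fun ω => WithTop.coe_le_coe.mpr le_dyadicCeil)
    (hM.2.1 1 (right_mem_Icc.mpr zero_le_one)) hsample hconv hmeas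

namespace SimpleIntegrand

variable {ℱ : Filtration ℝ m0} (Hs : SimpleIntegrand ℱ)

lemma val_τ_succ {i : Fin Hs.k} {ω : Ω} (h : Hs.τ i.castSucc ω < Hs.τ i.succ ω) :
    Hs.val (Hs.τ i.succ ω) ω = Hs.H i ω := by
  rw [val, Finset.sum_eq_single_of_mem i (Finset.mem_univ i), if_pos ⟨h, le_rfl⟩]
  intro j _ hji
  refine if_neg fun ⟨hj₁, hj₂⟩ => ?_
  rcases hji.lt_or_gt with hj | hj
  · exact (hj₂.trans (Hs.τ_mono ω (Fin.succ_le_castSucc_iff.mpr hj))).not_gt h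
  · exact (Hs.τ_mono ω (Fin.succ_le_castSucc_iff.mpr hj)).not_gt hj₁

lemma abs_H_mul_sub_le {c : ℝ} (hc : Hs.BddBy c) (S : ℝ → Ω → ℝ) (i : Fin Hs.k) (ω : Ω) :
    |Hs.H i ω * (S (Hs.τ i.succ ω) ω - S (Hs.τ i.castSucc ω) ω)| ≤
      c * |S (Hs.τ i.succ ω) ω - S (Hs.τ i.castSucc ω) ω| := by
  rcases (Hs.τ_mono ω (Fin.castSucc_lt_succ (i := i)).le).lt_or_eq with h | h
  · rw [abs_mul, ← Hs.val_τ_succ h]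
    exact mul_le_mul_of_nonneg_right (hc _ ω) (abs_nonneg _)
  · simp [h]

end SimpleIntegrand

lemma goodIntegrator_of_integral_sq_le {ℱ : Filtration ℝ m0} {P : Measure Ω}
    {S : ℝ → Ω → ℝ} (K : ℝ)
    (hS : ∀ (Hs : SimpleIntegrand ℱ) (c : ℝ), Hs.BddBy c →
      MemLp (elemIntegral S Hs) 2 P ∧ ∫ ω, elemIntegral S Hs ω ^ 2 ∂P ≤ c ^ 2 * K) :
    GoodIntegrator ℱ P S := fun _ _ hc hc0 =>
  tendstoInMeasure_zero_of_integral_sq_le (fun n => (hS _ _ (hc n)).1)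
    (fun n => (hS _ _ (hc n)).2) (by simpa using (hc0.pow 2).mul_const K)

theorem MartingaleOn.integral_sq_elemIntegral_le {ℱ : Filtration ℝ m0} {P : Measure Ω}
    [IsFiniteMeasure P] (hUC : UsualConditions ℱ P) {M : ℝ → Ω → ℝ} (hM_cadlag : Cadlag M)
    (hM : MartingaleOn ℱ P M) (hM1 : MemLp (M 1) 2 P) (Hs : SimpleIntegrand ℱ) {c : ℝ}
    (hc : Hs.BddBy c) :
    MemLp (elemIntegral M Hs) 2 P ∧ ∫ ω, elemIntegral M Hs ω ^ 2 ∂P ≤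
      c ^ 2 * (∫ ω, M 1 ω ^ 2 ∂P - ∫ ω, M 0 ω ^ 2 ∂P) := by
  have hτ := Hs.τ_stopping
  have hX : ∀ i, (fun ω => M (Hs.τ i ω) ω) =ᵐ[P] P[M 1|(hτ i).measurableSpace] := fun i =>
    hM.stoppedValue_ae_eq_condExp hUC hM_cadlag (hτ i) (Hs.τ_mem i)
  have h𝒢 : Monotone fun i => (hτ i).measurableSpace := fun i j hij =>
    IsStoppingTime.measurableSpace_mono _ _ fun ω => WithTop.coe_le_coe.mpr (Hs.τ_mono ω hij)
  have h𝒢m : ∀ i, (hτ i).measurableSpace ≤ m0 := fun i =>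
    (hτ i).measurableSpace_le_of_le fun ω => WithTop.coe_le_coe.mpr (Hs.τ_mem i ω).2
  obtain ⟨hmem, hle⟩ := integral_sq_sum_mul_sub_castSucc_le h𝒢 h𝒢m hM1 hX Hs.H_meas
    (Hs.abs_H_mul_sub_le hc M)
  refine ⟨hmem, hle.trans (mul_le_mul_of_nonneg_left (sub_le_sub ?_ ?_) (sq_nonneg c))⟩
  · exact integral_sq_le_of_ae_eq_condExp (h𝒢m _) hM1 (hX _)
  · have hℱ0 : ℱ 0 ≤ (hτ 0).measurableSpace :=
      (hτ 0).le_measurableSpace_of_const_le fun ω => WithTop.coe_le_coe.mpr (Hs.τ_mem 0 ω).1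
    have hM0 : M 0 =ᵐ[P] P[fun ω => M (Hs.τ 0 ω) ω|ℱ 0] :=
      ((hM.2.2 0 1 (left_mem_Icc.mpr zero_le_one) (right_mem_Icc.mpr zero_le_one)
        zero_le_one).symm.trans (condExp_condExp_of_le hℱ0 (h𝒢m 0)).symm).trans
        (condExp_congr_ae (hX 0)).symm
    exact integral_sq_le_of_ae_eq_condExp (ℱ.le 0) ((hM1.condExp one_le_two).ae_eq (hX 0).symm)
      hM0

/-- A càdlàg square-integrable martingale `M` is a good integrator, and
`E[I_M(H)²] ≤ ‖H‖_∞² E[M_1² - M_0²]` for every simple integrand `H`. -/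
theorem sqIntegrable_martingale_goodIntegrator
    (ℱ : Filtration ℝ m0) (P : Measure Ω) [IsProbabilityMeasure P]
    (hUC : UsualConditions ℱ P) (M : ℝ → Ω → ℝ)
    (hM_cadlag : Cadlag M) (hM_mart : MartingaleOn ℱ P M)
    (hM_sq : ∀ t ∈ Set.Icc (0:ℝ) 1, Integrable (fun ω => (M t ω) ^ 2) P) :
    GoodIntegrator ℱ P M ∧
      ∀ (Hs : SimpleIntegrand ℱ) (c : ℝ), Hs.BddBy c →
        ∫ ω, (elemIntegral M Hs ω) ^ 2 ∂P ≤
          c ^ 2 * ∫ ω, ((M 1 ω) ^ 2 - (M 0 ω) ^ 2) ∂P := by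
  have h0 : (0 : ℝ) ∈ Icc (0 : ℝ) 1 := left_mem_Icc.mpr zero_le_one
  have h1 : (1 : ℝ) ∈ Icc (0 : ℝ) 1 := right_mem_Icc.mpr zero_le_one
  have hM1 : MemLp (M 1) 2 P := (memLp_two_iff_integrable_sq
    ((hM_mart.1 1 h1).mono (ℱ.le 1)).aestronglyMeasurable).mpr (hM_sq 1 h1)
  have hL2 : ∀ (Hs : SimpleIntegrand ℱ) (c : ℝ), Hs.BddBy c →
      MemLp (elemIntegral M Hs) 2 P ∧ ∫ ω, elemIntegral M Hs ω ^ 2 ∂P ≤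
        c ^ 2 * ∫ ω, (M 1 ω ^ 2 - M 0 ω ^ 2) ∂P := fun Hs c hc => by
    rw [integral_sub (hM_sq 1 h1) (hM_sq 0 h0)]
    exact hM_mart.integral_sq_elemIntegral_le hUC hM_cadlag hM1 Hs hc
  exact ⟨goodIntegrator_of_integral_sq_le _ hL2, fun Hs c hc => (hL2 Hs c hc).2⟩

end BD
end
end
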